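/- arXiv:1710.03172 — 2 statements merged into one kernel-verified Lean document; each statement's English description precedes it below -/
import Mathlib

section
/- Let X, Y, Z be Banach spaces, Y₁ ⊆ Y a subspace with continuous inclusion, A : X → Y a bounded injective linear operator, K : X → Z a compact linear operator, and X₁ ⊆ X a linear subspace mapped into Y₁ by A. Suppose there exists C > 0 such that ‖f‖_X ≤ C‖Af‖_{Y₁} + ‖Kf‖_Z for all f ∈ X₁. Then there exists C' > 0 such that ‖f‖_X ≤ C'‖Af‖_{Y₁} for all f ∈ X₁. -/
/-!
If no such `C'` existed, there would be unit vectors `gₙ ∈ X₁` with `A₁ gₙ → 0`. Compactness of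
`K` gives a subsequence along which `K gₙ` converges, and the estimate applied to differences
makes that subsequence Cauchy in `X`. Its limit `f` has norm one, yet `A f = lim ι (A₁ gₙ) = 0`,
contradicting the injectivity of `A`.
-/

open Filter Topology Metric

theorem cauchySeq_of_dist_le_mul_add {ι α β γ : Type*} [Nonempty ι] [SemilatticeSup ι]
    [PseudoMetricSpace α] [PseudoMetricSpace β] [PseudoMetricSpace γ] {u : ι → α} {v : ι → β}
    {w : ι → γ} (hv : CauchySeq v) (hw : CauchySeq w) (C : ℝ)
    (h : ∀ m n, dist (u m) (u n) ≤ C * dist (v m) (v n) + dist (w m) (w n)) :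
    CauchySeq u := by
  rw [cauchySeq_iff_tendsto_dist_atTop_0] at hv hw ⊢
  have hbound := (hv.const_mul C).add hw
  rw [mul_zero, add_zero] at hbound
  exact squeeze_zero (fun _ => dist_nonneg) (fun p => h p.1 p.2) hbound

section

variable {𝕜 E F Z : Type*} [RCLike 𝕜] [NormedAddCommGroup E] [NormedSpace 𝕜 E]
  [NormedAddCommGroup F] [NormedSpace 𝕜 F] [NormedAddCommGroup Z] [NormedSpace 𝕜 Z]

theorem LinearMap.exists_seq_norm_eq_one_tendsto_zero (T : E →ₗ[𝕜] F)
    (h : ∀ C > 0, ∃ x, C * ‖T x‖ < ‖x‖) :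
    ∃ g : ℕ → E, (∀ n, ‖g n‖ = 1) ∧ Tendsto (fun n => T (g n)) atTop (𝓝 0) := by
  have hseq : ∀ n : ℕ, ∃ y : E, ‖y‖ = 1 ∧ ‖T y‖ ≤ 1 / (n + 1) := by
    intro n
    obtain ⟨x, hx⟩ := h (n + 1) (by positivity)
    have hx0 : 0 < ‖x‖ := lt_of_le_of_lt (by positivity) hx
    refine ⟨(‖x‖⁻¹ : 𝕜) • x, norm_smul_inv_norm (norm_pos_iff.mp hx0), ?_⟩
    rw [map_smul, norm_smul, norm_inv, RCLike.norm_ofReal, abs_norm, inv_mul_le_iff₀ hx0,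
      mul_one_div, le_div_iff₀ (by positivity)]
    linarith
  choose g hg1 hg2 using hseq
  refine ⟨g, hg1, tendsto_zero_iff_norm_tendsto_zero.mpr ?_⟩
  exact squeeze_zero (fun _ => norm_nonneg _) hg2 tendsto_one_div_add_atTop_nhds_zero_nat

theorem IsCompactOperator.exists_cauchySeq_subseq_of_norm_le {K : E →L[𝕜] Z}
    (hK : IsCompactOperator K) (T : E →ₗ[𝕜] F) (C : ℝ)
    (hEst : ∀ x, ‖x‖ ≤ C * ‖T x‖ + ‖K x‖) {g : ℕ → E} {R : ℝ} (hg : ∀ n, ‖g n‖ ≤ R)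
    (hTg : CauchySeq fun n => T (g n)) :
    ∃ φ : ℕ → ℕ, StrictMono φ ∧ CauchySeq (g ∘ φ) := by
  have hKg : ∀ n, K (g n) ∈ closure (K '' closedBall 0 R) := fun n =>
    subset_closure ⟨g n, mem_closedBall_zero_iff.mpr (hg n), rfl⟩
  obtain ⟨z, -, φ, hφ, hKφ⟩ :=
    (hK.isCompact_closure_image_closedBall (f := (K : E →ₗ[𝕜] Z)) R).tendsto_subseq hKg
  refine ⟨φ, hφ, cauchySeq_of_dist_le_mul_add (hTg.comp_tendsto hφ.tendsto_atTop)
    hKφ.cauchySeq C fun m n => ?_⟩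
  simpa only [dist_eq_norm, Function.comp_apply, ← map_sub] using hEst (g (φ m) - g (φ n))

end

theorem stability_from_uniqueness_general
    {X Y Z Y₁ : Type*}
    [NormedAddCommGroup X] [NormedSpace ℝ X] [CompleteSpace X]
    [NormedAddCommGroup Y] [NormedSpace ℝ Y]
    [NormedAddCommGroup Z] [NormedSpace ℝ Z]
    [NormedAddCommGroup Y₁] [NormedSpace ℝ Y₁]
    (ι : Y₁ →L[ℝ] Y)
    (A : X →L[ℝ] Y) (hA : Function.Injective A)
    (K : X →L[ℝ] Z) (hK : IsCompactOperator K)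
    (X₁ : Submodule ℝ X)
    (A₁ : X₁ →ₗ[ℝ] Y₁) (hA₁ : ∀ f : X₁, ι (A₁ f) = A (f : X))
    (C : ℝ)
    (hEst : ∀ f : X₁, ‖(f : X)‖ ≤ C * ‖A₁ f‖ + ‖K (f : X)‖) :
    ∃ C' > 0, ∀ f : X₁, ‖(f : X)‖ ≤ C' * ‖A₁ f‖ := by
  by_contra! h
  obtain ⟨g, hg1, hA₁g⟩ := A₁.exists_seq_norm_eq_one_tendsto_zero h
  have hK₁ : IsCompactOperator (K.comp X₁.subtypeL) := hK.comp_clm X₁.subtypeL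
  obtain ⟨φ, hφ, hcauchy⟩ := hK₁.exists_cauchySeq_subseq_of_norm_le A₁ C hEst
    (fun n => (hg1 n).le) hA₁g.cauchySeq
  obtain ⟨f, hf⟩ := cauchySeq_tendsto_of_complete
    (uniformContinuous_subtype_val.comp_cauchySeq hcauchy)
  have hnorm : ‖f‖ = 1 :=
    tendsto_nhds_unique hf.norm (tendsto_const_nhds.congr fun n => (hg1 (φ n)).symm)
  have hAf : A f = 0 := by
    refine tendsto_nhds_unique ((A.continuous.tendsto f).comp hf) ?_
    simpa only [Function.comp_def, ← hA₁, map_zero] using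
      (ι.continuous.tendsto 0).comp (hA₁g.comp hφ.tendsto_atTop)
  have hf0 : f = 0 := hA (by rw [hAf, map_zero])
  simp [hf0] at hnorm

/-- Uniqueness-implies-stability lemma: if `‖f‖ ≤ C‖Af‖_{Y₁} + ‖Kf‖_Z` on a subspace
`X₁` mapped by the injective bounded operator `A` into `Y₁`, with `K` compact, then
`‖f‖ ≤ C'‖Af‖_{Y₁}` on `X₁`. -/
theorem stability_from_uniqueness
    {X Y Z Y₁ : Type*}
    [NormedAddCommGroup X] [NormedSpace ℝ X] [CompleteSpace X]
    [NormedAddCommGroup Y] [NormedSpace ℝ Y] [CompleteSpace Y]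
    [NormedAddCommGroup Z] [NormedSpace ℝ Z] [CompleteSpace Z]
    [NormedAddCommGroup Y₁] [NormedSpace ℝ Y₁]
    (ι : Y₁ →L[ℝ] Y) (hι : Function.Injective ι)
    (A : X →L[ℝ] Y) (hA : Function.Injective A)
    (K : X →L[ℝ] Z) (hK : IsCompactOperator K)
    (X₁ : Submodule ℝ X)
    (A₁ : X₁ →ₗ[ℝ] Y₁) (hA₁ : ∀ f : X₁, ι (A₁ f) = A (f : X))
    (C : ℝ) (hC : 0 < C)
    (hEst : ∀ f : X₁, ‖(f : X)‖ ≤ C * ‖A₁ f‖ + ‖K (f : X)‖) :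
    ∃ C' > 0, ∀ f : X₁, ‖(f : X)‖ ≤ C' * ‖A₁ f‖ :=
  stability_from_uniqueness_general ι A hA K hK X₁ A₁ hA₁ C hEst
end

section
/- Let w : ℝⁿ-valued, w(y,τ) = ∫₀^τ K_s(G)(y) ds where K_s is the integral operator with matrix kernel k_s(y,z) satisfying |k_s(y,z)| ≤ C s^{-1/2} e^{-c(y-z)²/s} (τ-s)^{-1/2} e^{-cz²/(τ-s)}. Then for every τ ∈ (0,T], ‖w(·,τ)‖_{L²(ℝ)} ≤ C'√τ ‖G‖_{L²(ℝ)} with C' independent of τ. -/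
/-!
Bound the kernel by the majorant `C (τ-s)^{-1/2} · s^{-1/2} e^{-c(y-z)²/s}` and regard it as a
kernel from `y ∈ ℝ` to `(s, z) ∈ (0, τ) × ℝ`. Its integral in `z`, and also in `y`, is
`C √(π/c) (τ-s)^{-1/2}`, and `∫₀^τ (τ-s)^{-1/2} ds = 2√τ`. So every row of this kernel has mass at
most `A = 2C√(π/c)√τ`, and although its column sums blow up as `s → τ`, they are integrable in `s`
against a function of `z` alone. Schur's test then gives `‖wᵢ‖₂ ≤ A ‖∑ⱼ |Gⱼ|‖₂`, and
`‖∑ⱼ |Gⱼ|‖₂² ≤ n ∑ⱼ ‖Gⱼ‖₂²` by Cauchy–Schwarz.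
-/

open MeasureTheory Real Set
open scoped ENNReal

section Schur

variable {α β : Type*} [MeasurableSpace α] [MeasurableSpace β] {μ : Measure α} {ν : Measure β}

theorem lintegral_mul_sq_le {f g : α → ℝ≥0∞} (hf : AEMeasurable f μ) (hg : AEMeasurable g μ) :
    (∫⁻ a, f a * g a ∂μ) ^ 2 ≤ (∫⁻ a, f a ∂μ) * ∫⁻ a, f a * g a ^ 2 ∂μ := by
  have hsqrt : ∀ x : ℝ≥0∞, x ^ (1 / 2 : ℝ) * x ^ (1 / 2 : ℝ) = x := fun x => by
    rw [← ENNReal.rpow_add_of_nonneg _ _ (by norm_num) (by norm_num)]; norm_num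
  have hsplit : ∀ a, f a * g a = f a ^ (1 / 2 : ℝ) * (f a * g a ^ 2) ^ (1 / 2 : ℝ) := fun a => by
    rw [ENNReal.mul_rpow_of_nonneg _ _ (by norm_num), ← ENNReal.rpow_natCast, ← ENNReal.rpow_mul,
      ← mul_assoc, hsqrt]
    norm_num
  have holder := ENNReal.lintegral_mul_norm_pow_le hf (hf.mul (hg.pow_const 2))
    (p := 1 / 2) (q := 1 / 2) (by norm_num) (by norm_num) (by norm_num)
  calc (∫⁻ a, f a * g a ∂μ) ^ 2
      ≤ ((∫⁻ a, f a ∂μ) ^ (1 / 2 : ℝ) * (∫⁻ a, f a * g a ^ 2 ∂μ) ^ (1 / 2 : ℝ)) ^ 2 := by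
        gcongr
        exact (lintegral_congr hsplit).trans_le holder
    _ = (∫⁻ a, f a ∂μ) * ∫⁻ a, f a * g a ^ 2 ∂μ := by
        rw [mul_pow, sq, sq, hsqrt, hsqrt]

/-- Schur's test, with the column sums kept inside the integral instead of bounded uniformly. -/
theorem lintegral_sq_lintegral_mul_le [SFinite μ] [SFinite ν] {K : α → β → ℝ≥0∞}
    (hK : Measurable (Function.uncurry K)) {g : β → ℝ≥0∞} (hg : AEMeasurable g ν) {A : ℝ≥0∞}
    (hA : ∀ x, ∫⁻ y, K x y ∂ν ≤ A) :
    ∫⁻ x, (∫⁻ y, K x y * g y ∂ν) ^ 2 ∂μ ≤ A * ∫⁻ y, (∫⁻ x, K x y ∂μ) * g y ^ 2 ∂ν := by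
  have hKg : AEMeasurable (Function.uncurry fun x y => K x y * g y ^ 2) (μ.prod ν) :=
    hK.aemeasurable.mul (hg.pow_const 2).comp_snd
  have hKg_right : AEMeasurable (fun x => ∫⁻ y, K x y * g y ^ 2 ∂ν) μ :=
    hKg.lintegral_prod_right'
  calc ∫⁻ x, (∫⁻ y, K x y * g y ∂ν) ^ 2 ∂μ
      ≤ ∫⁻ x, A * ∫⁻ y, K x y * g y ^ 2 ∂ν ∂μ := lintegral_mono fun x =>
        (lintegral_mul_sq_le (hK.of_uncurry_left).aemeasurable hg).trans
          (mul_le_mul_left (hA x) _)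
    _ = A * ∫⁻ y, ∫⁻ x, K x y * g y ^ 2 ∂μ ∂ν := by
        rw [lintegral_const_mul'' A hKg_right, lintegral_lintegral_swap hKg]
    _ = A * ∫⁻ y, (∫⁻ x, K x y ∂μ) * g y ^ 2 ∂ν := by
        simp_rw [lintegral_mul_const _ hK.of_uncurry_right]

end Schur

theorem lintegral_sq_sum_le {α ι : Type*} [MeasurableSpace α] {μ : Measure α} (s : Finset ι)
    {f : ι → α → ℝ≥0∞} (hf : ∀ i ∈ s, AEMeasurable (f i) μ) :
    ∫⁻ a, (∑ i ∈ s, f i a) ^ 2 ∂μ ≤ s.card * ∑ i ∈ s, ∫⁻ a, f i a ^ 2 ∂μ := by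
  have hsq : ∀ a, (∑ i ∈ s, f i a) ^ 2 ≤ s.card * ∑ i ∈ s, f i a ^ 2 := fun a => by
    simpa [ENNReal.rpow_two, show (2 : ℝ) - 1 = 1 by norm_num] using
      ENNReal.rpow_sum_le_const_mul_sum_rpow s (fun i => f i a) (p := 2) (by norm_num)
  calc ∫⁻ a, (∑ i ∈ s, f i a) ^ 2 ∂μ ≤ ∫⁻ a, s.card * ∑ i ∈ s, f i a ^ 2 ∂μ := lintegral_mono hsq
    _ = s.card * ∑ i ∈ s, ∫⁻ a, f i a ^ 2 ∂μ := by
        rw [lintegral_const_mul' _ _ (ENNReal.natCast_ne_top _),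
          lintegral_finsetSum' _ fun i hi => (hf i hi).pow_const 2]

theorem eLpNorm_two_sq_eq_lintegral {α E : Type*} [MeasurableSpace α] {μ : Measure α}
    [NormedAddCommGroup E] (f : α → E) :
    eLpNorm f 2 μ ^ 2 = ∫⁻ a, ‖f a‖ₑ ^ 2 ∂μ := by
  simpa using eLpNorm_nnreal_pow_eq_lintegral (f := f) (μ := μ) (p := 2) two_ne_zero

theorem enorm_integral_integral_le_lintegral_prod {α β E : Type*} [MeasurableSpace α]
    [MeasurableSpace β] {μ : Measure α} {ν : Measure β} [SFinite ν] [NormedAddCommGroup E]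
    [NormedSpace ℝ E] {f : α → β → E} {F : α × β → ℝ≥0∞} (hF : AEMeasurable F (μ.prod ν))
    (hfF : ∀ᵐ a ∂μ, ∀ᵐ b ∂ν, ‖f a b‖ₑ ≤ F (a, b)) :
    ‖∫ a, ∫ b, f a b ∂ν ∂μ‖ₑ ≤ ∫⁻ p, F p ∂μ.prod ν := by
  rw [lintegral_prod _ hF]
  refine (enorm_integral_le_lintegral_enorm _).trans (lintegral_mono_ae ?_)
  filter_upwards [hfF] with a ha
  exact (enorm_integral_le_lintegral_enorm _).trans (lintegral_mono_ae ha)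

theorem enorm_sum_mul_le_of_abs_le {ι : Type*} (s : Finset ι) {a x : ι → ℝ} {B : ℝ}
    (ha : ∀ i ∈ s, |a i| ≤ B) :
    ‖∑ i ∈ s, a i * x i‖ₑ ≤ ENNReal.ofReal B * ∑ i ∈ s, ‖x i‖ₑ := by
  rw [Finset.mul_sum]
  refine (enorm_sum_le _ _).trans (Finset.sum_le_sum fun i hi => ?_)
  rw [enorm_mul, Real.enorm_eq_ofReal_abs (a i)]
  gcongr
  exact ha i hi

theorem lintegral_ofReal_inv_sqrt_mul_exp_neg_sq {c s : ℝ} (hc : 0 < c) (hs : 0 < s) (a : ℝ) :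
    ∫⁻ x, ENNReal.ofReal ((√s)⁻¹ * exp (-c * (x - a) ^ 2 / s)) = ENNReal.ofReal √(π / c) := by
  have hgauss : ∫ x, (√s)⁻¹ * exp (-(c / s) * x ^ 2) = √(π / c) := by
    rw [integral_const_mul, integral_gaussian, div_div_eq_mul_div, sqrt_div' _ hc.le,
      sqrt_div' _ hc.le, sqrt_mul' _ hs.le]
    field_simp
  have hint : Integrable (fun x => (√s)⁻¹ * exp (-(c / s) * x ^ 2)) :=
    (integrable_exp_neg_mul_sq (div_pos hc hs)).const_mul _
  rw [lintegral_sub_right_eq_self (fun x => ENNReal.ofReal ((√s)⁻¹ * exp (-c * x ^ 2 / s))) a,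
    ← hgauss, ofReal_integral_eq_lintegral_ofReal hint (ae_of_all _ fun x => by positivity)]
  congr! 5
  ring

theorem lintegral_Ioo_ofReal_inv_sqrt_sub {τ : ℝ} (hτ : 0 ≤ τ) :
    ∫⁻ s in Ioo 0 τ, ENNReal.ofReal (√(τ - s))⁻¹ = ENNReal.ofReal (2 * √τ) := by
  have hpow : EqOn (fun s => (√(τ - s))⁻¹) (fun s => (τ - s) ^ (-(1 / 2) : ℝ)) (Ioo 0 τ) :=
    fun s hs => by
      show (√(τ - s))⁻¹ = (τ - s) ^ (-(1 / 2) : ℝ)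
      rw [sqrt_eq_rpow, rpow_neg (sub_pos.2 hs.2).le]
  have hint : IntervalIntegrable (fun s => (τ - s) ^ (-(1 / 2) : ℝ)) volume 0 τ := by
    simpa using ((intervalIntegral.intervalIntegrable_rpow' (a := 0) (b := τ) (r := -(1 / 2))
      (by norm_num)).comp_sub_left τ).symm
  have hval : ∫ s in (0)..τ, (τ - s) ^ (-(1 / 2) : ℝ) = 2 * √τ := by
    rw [intervalIntegral.integral_comp_sub_left (fun u => u ^ (-(1 / 2) : ℝ)), sub_zero, sub_self,
      integral_rpow (Or.inl (by norm_num)), sqrt_eq_rpow]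
    norm_num
    ring
  rw [setLIntegral_congr_fun measurableSet_Ioo fun s hs => congrArg ENNReal.ofReal (hpow hs),
    ← ofReal_integral_eq_lintegral_ofReal, ← integral_Ioc_eq_integral_Ioo,
    ← intervalIntegral.integral_of_le hτ, hval]
  · exact (intervalIntegrable_iff_integrableOn_Ioc_of_le hτ).1 hint |>.mono_set Ioo_subset_Ioc_self
  · exact (ae_restrict_iff' measurableSet_Ioo).2
      (ae_of_all _ fun s hs => rpow_nonneg (sub_pos.2 hs.2).le _)

noncomputable def duhamelMajorant (C c τ s y z : ℝ) : ℝ :=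
  C * (√s)⁻¹ * exp (-c * (y - z) ^ 2 / s) * (√(τ - s))⁻¹ * exp (-c * z ^ 2 / (τ - s))

section Majorant

variable {C c τ : ℝ}

@[fun_prop]
theorem Measurable.duhamelMajorant {α : Type*} [MeasurableSpace α] {s y z : α → ℝ}
    (hs : Measurable s) (hy : Measurable y) (hz : Measurable z) :
    Measurable fun a => duhamelMajorant C c τ (s a) (y a) (z a) := by
  unfold _root_.duhamelMajorant
  fun_prop

theorem ofReal_duhamelMajorant_le (hC : 0 ≤ C) (hc : 0 ≤ c) {s : ℝ} (hs : s < τ) (y z : ℝ) :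
    ENNReal.ofReal (duhamelMajorant C c τ s y z) ≤
      ENNReal.ofReal (C * (√(τ - s))⁻¹) * ENNReal.ofReal ((√s)⁻¹ * exp (-c * (y - z) ^ 2 / s)) := by
  rw [← ENNReal.ofReal_mul (by positivity)]
  refine ENNReal.ofReal_le_ofReal ?_
  have hdecay : exp (-c * z ^ 2 / (τ - s)) ≤ 1 :=
    exp_le_one_iff.2 (div_nonpos_of_nonpos_of_nonneg (by nlinarith [sq_nonneg z])
      (sub_pos.2 hs).le)
  calc duhamelMajorant C c τ s y z
      = C * (√(τ - s))⁻¹ * ((√s)⁻¹ * exp (-c * (y - z) ^ 2 / s)) * exp (-c * z ^ 2 / (τ - s)) := by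
        unfold duhamelMajorant; ring
    _ ≤ C * (√(τ - s))⁻¹ * ((√s)⁻¹ * exp (-c * (y - z) ^ 2 / s)) :=
        mul_le_of_le_one_right (by positivity) hdecay

theorem lintegral_duhamelMajorant_left_le (hC : 0 ≤ C) (hc : 0 < c) {s : ℝ} (hs : s ∈ Ioo 0 τ)
    (y : ℝ) : ∫⁻ z, ENNReal.ofReal (duhamelMajorant C c τ s y z) ≤
      ENNReal.ofReal (C * √(π / c) * (√(τ - s))⁻¹) := by
  calc ∫⁻ z, ENNReal.ofReal (duhamelMajorant C c τ s y z)
      ≤ ∫⁻ z, ENNReal.ofReal (C * (√(τ - s))⁻¹) *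
          ENNReal.ofReal ((√s)⁻¹ * exp (-c * (z - y) ^ 2 / s)) := lintegral_mono fun z => by
        rw [sub_sq_comm z y]; exact ofReal_duhamelMajorant_le hC hc.le hs.2 y z
    _ = _ := by
        rw [lintegral_const_mul' _ _ ENNReal.ofReal_ne_top,
          lintegral_ofReal_inv_sqrt_mul_exp_neg_sq hc hs.1, ← ENNReal.ofReal_mul (by positivity),
          mul_right_comm]

theorem lintegral_duhamelMajorant_right_le (hC : 0 ≤ C) (hc : 0 < c) {s : ℝ} (hs : s ∈ Ioo 0 τ)
    (z : ℝ) : ∫⁻ y, ENNReal.ofReal (duhamelMajorant C c τ s y z) ≤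
      ENNReal.ofReal (C * √(π / c) * (√(τ - s))⁻¹) := by
  calc ∫⁻ y, ENNReal.ofReal (duhamelMajorant C c τ s y z)
      ≤ ∫⁻ y, ENNReal.ofReal (C * (√(τ - s))⁻¹) *
          ENNReal.ofReal ((√s)⁻¹ * exp (-c * (y - z) ^ 2 / s)) :=
        lintegral_mono fun y => ofReal_duhamelMajorant_le hC hc.le hs.2 y z
    _ = _ := by
        rw [lintegral_const_mul' _ _ ENNReal.ofReal_ne_top,
          lintegral_ofReal_inv_sqrt_mul_exp_neg_sq hc hs.1, ← ENNReal.ofReal_mul (by positivity),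
          mul_right_comm]

end Majorant

theorem lintegral_Ioo_prod_le_of_inv_sqrt_sub {τ K : ℝ} (hτ : 0 ≤ τ) (hK : 0 ≤ K)
    {F : ℝ × ℝ → ℝ≥0∞} (hF : AEMeasurable F ((volume.restrict (Ioo 0 τ)).prod volume))
    (B : ℝ≥0∞) (hFB : ∀ s ∈ Ioo 0 τ, ∫⁻ z, F (s, z) ≤ ENNReal.ofReal (K * (√(τ - s))⁻¹) * B) :
    ∫⁻ p, F p ∂(volume.restrict (Ioo 0 τ)).prod volume ≤ ENNReal.ofReal (K * (2 * √τ)) * B := by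
  calc ∫⁻ p, F p ∂(volume.restrict (Ioo 0 τ)).prod volume
      ≤ ∫⁻ s in Ioo 0 τ, ENNReal.ofReal K * ENNReal.ofReal (√(τ - s))⁻¹ * B := by
        rw [lintegral_prod _ hF]
        refine setLIntegral_mono' measurableSet_Ioo fun s hs => ?_
        rw [← ENNReal.ofReal_mul hK]
        exact hFB s hs
    _ = ENNReal.ofReal (K * (2 * √τ)) * B := by
        rw [lintegral_mul_const _ (by fun_prop), lintegral_const_mul' _ _ ENNReal.ofReal_ne_top,
          lintegral_Ioo_ofReal_inv_sqrt_sub hτ, ← ENNReal.ofReal_mul hK]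

theorem lintegral_sq_lintegral_duhamelMajorant_mul_le {C c τ : ℝ} (hC : 0 ≤ C) (hc : 0 < c)
    (hτ : 0 ≤ τ) {g : ℝ → ℝ≥0∞} (hg : AEMeasurable g) :
    ∫⁻ y, (∫⁻ p, ENNReal.ofReal (duhamelMajorant C c τ p.1 y p.2) * g p.2
        ∂(volume.restrict (Ioo 0 τ)).prod volume) ^ 2 ≤
      ENNReal.ofReal (C * √(π / c) * (2 * √τ)) ^ 2 * ∫⁻ z, g z ^ 2 := by
  have hK : 0 ≤ C * √(π / c) := by positivity
  have hmeas : Measurable (Function.uncurry fun (y : ℝ) (p : ℝ × ℝ) =>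
      ENNReal.ofReal (duhamelMajorant C c τ p.1 y p.2)) := by fun_prop
  have hrow : ∀ y, ∫⁻ p, ENNReal.ofReal (duhamelMajorant C c τ p.1 y p.2)
      ∂(volume.restrict (Ioo 0 τ)).prod volume ≤ ENNReal.ofReal (C * √(π / c) * (2 * √τ)) := by
    intro y
    simpa using lintegral_Ioo_prod_le_of_inv_sqrt_sub hτ hK (by fun_prop) 1 fun s hs => by
      simpa using lintegral_duhamelMajorant_left_le hC hc hs y
  have hcol : ∫⁻ p, (∫⁻ y, ENNReal.ofReal (duhamelMajorant C c τ p.1 y p.2)) * g p.2 ^ 2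
      ∂(volume.restrict (Ioo 0 τ)).prod volume ≤
        ENNReal.ofReal (C * √(π / c) * (2 * √τ)) * ∫⁻ z, g z ^ 2 := by
    refine lintegral_Ioo_prod_le_of_inv_sqrt_sub hτ hK
      (hmeas.lintegral_prod_left'.aemeasurable.mul
        (hg.pow_const 2).comp_snd) _ fun s hs => ?_
    calc ∫⁻ z, (∫⁻ y, ENNReal.ofReal (duhamelMajorant C c τ s y z)) * g z ^ 2
        ≤ ∫⁻ z, ENNReal.ofReal (C * √(π / c) * (√(τ - s))⁻¹) * g z ^ 2 :=
          lintegral_mono fun z => by gcongr; exact lintegral_duhamelMajorant_right_le hC hc hs z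
      _ = _ := lintegral_const_mul' _ _ ENNReal.ofReal_ne_top
  calc _ ≤ _ := lintegral_sq_lintegral_mul_le hmeas hg.comp_snd hrow
    _ ≤ ENNReal.ofReal (C * √(π / c) * (2 * √τ)) *
          (ENNReal.ofReal (C * √(π / c) * (2 * √τ)) * ∫⁻ z, g z ^ 2) := by gcongr
    _ = _ := by ring

theorem enorm_intervalIntegral_integral_sum_le {ι : Type*} [Fintype ι] {C c τ : ℝ} (hτ : 0 ≤ τ)
    (y : ℝ) {a : ℝ → ℝ → ι → ℝ} {G : ι → ℝ → ℝ} (hG : ∀ j, AEMeasurable (G j))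
    (ha : ∀ s ∈ Ioo 0 τ, ∀ z j, |a s z j| ≤ duhamelMajorant C c τ s y z) :
    ‖∫ s in (0)..τ, ∫ z, ∑ j, a s z j * G j z‖ₑ ≤
      ∫⁻ p, ENNReal.ofReal (duhamelMajorant C c τ p.1 y p.2) * ∑ j, ‖G j p.2‖ₑ
        ∂(volume.restrict (Ioo 0 τ)).prod volume := by
  rw [intervalIntegral.integral_of_le hτ, integral_Ioc_eq_integral_Ioo]
  refine enorm_integral_integral_le_lintegral_prod
    ((by fun_prop : Measurable _).aemeasurable.mul
      (Finset.aemeasurable_fun_sum _ fun j _ => (hG j).enorm).comp_snd) ?_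
  filter_upwards [ae_restrict_mem measurableSet_Ioo] with s hs
  exact ae_of_all _ fun z => enorm_sum_mul_le_of_abs_le _ fun j _ => ha s hs z j

theorem natCast_mul_ofReal_sq_le (n : ℕ) {K τ : ℝ} (hK : 0 ≤ K) (hτ : 0 ≤ τ) :
    ((n : ℝ≥0∞) * ENNReal.ofReal (K * (2 * √τ))) ^ 2 ≤
      ENNReal.ofReal ((2 * (n + 1) * K) ^ 2 * τ) := by
  rw [← ENNReal.ofReal_natCast, ← ENNReal.ofReal_mul (by positivity),
    ← ENNReal.ofReal_pow (by positivity)]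
  refine ENNReal.ofReal_le_ofReal ?_
  calc (n * (K * (2 * √τ))) ^ 2 = (2 * n * K) ^ 2 * √τ ^ 2 := by ring
    _ ≤ (2 * (n + 1) * K) ^ 2 * τ := by
        rw [sq_sqrt hτ]
        gcongr
        linarith

theorem duhamel_L2_bound_general
    (n : ℕ) (C c T : ℝ) (hC : 0 < C) (hc : 0 < c) :
    ∃ C' > 0, ∀ τ : ℝ, 0 < τ → τ ≤ T →
      ∀ (k : ℝ → ℝ → ℝ → Matrix (Fin n) (Fin n) ℝ) (G : Fin n → ℝ → ℝ)
        (w : Fin n → ℝ → ℝ),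
        (∀ i j s, Measurable (fun p : ℝ × ℝ => k s p.1 p.2 i j)) →
        (∀ j, MemLp (G j) 2 (volume : Measure ℝ)) →
        (∀ s ∈ Set.Ioo 0 τ, ∀ y z i j,
          |k s y z i j| ≤ C * (Real.sqrt s)⁻¹ * Real.exp (-c * (y - z) ^ 2 / s) *
            (Real.sqrt (τ - s))⁻¹ * Real.exp (-c * z ^ 2 / (τ - s))) →
        (∀ i y, w i y = ∫ s in (0:ℝ)..τ, ∫ z : ℝ, ∑ j, k s y z i j * G j z) →
        ∑ i, (eLpNorm (w i) 2 (volume : Measure ℝ)) ^ 2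
          ≤ ENNReal.ofReal (C' ^ 2 * τ) *
              ∑ j, (eLpNorm (G j) 2 (volume : Measure ℝ)) ^ 2 := by
  refine ⟨2 * (n + 1) * (C * √(π / c)), by positivity, fun τ hτ _ k G w _ hG hk hw => ?_⟩
  set S := ∑ j, eLpNorm (G j) 2 volume ^ 2
  set A := ENNReal.ofReal (C * √(π / c) * (2 * √τ))
  have hGm : ∀ j, AEMeasurable (G j) := fun j => (hG j).1.aemeasurable
  have hsum : ∫⁻ z, (∑ j, ‖G j z‖ₑ) ^ 2 ≤ n * S := by
    simpa [S, eLpNorm_two_sq_eq_lintegral] using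
      lintegral_sq_sum_le Finset.univ fun j _ => (hGm j).enorm
  have hw_le : ∀ i, eLpNorm (w i) 2 volume ^ 2 ≤ A ^ 2 * (n * S) := fun i => by
    rw [eLpNorm_two_sq_eq_lintegral]
    refine (lintegral_mono fun y => ?_).trans <|
      (lintegral_sq_lintegral_duhamelMajorant_mul_le hC.le hc hτ.le
        (Finset.aemeasurable_fun_sum _ fun j _ => (hGm j).enorm)).trans (mul_le_mul_right hsum _)
    rw [hw i y]
    gcongr
    exact enorm_intervalIntegral_integral_sum_le hτ.le y hGm fun s hs z j => hk s hs y z i j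
  calc ∑ i, eLpNorm (w i) 2 volume ^ 2 ≤ ∑ _i : Fin n, A ^ 2 * (n * S) :=
        Finset.sum_le_sum fun i _ => hw_le i
    _ = (n * A) ^ 2 * S := by
        rw [Finset.sum_const, Finset.card_univ, Fintype.card_fin, nsmul_eq_mul]
        ring
    _ ≤ ENNReal.ofReal ((2 * (n + 1) * (C * √(π / c))) ^ 2 * τ) * S := by
        gcongr
        exact natCast_mul_ofReal_sq_le n (by positivity) hτ.le

/-- Duhamel `L²` bound: if `w(y,τ) = ∫₀^τ K_s(G)(y) ds` where the matrix kernel of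
`K_s` satisfies the Gaussian bound
`|k_s(y,z)| ≤ C s^{-1/2} e^{-c(y-z)²/s} (τ-s)^{-1/2} e^{-cz²/(τ-s)}`, then
`‖w(·,τ)‖_{L²(ℝ)ⁿ} ≤ C'√τ ‖G‖_{L²(ℝ)ⁿ}` with `C'` independent of `τ ∈ (0,T]`. -/
theorem duhamel_L2_bound
    (n : ℕ) (C c T : ℝ) (hC : 0 < C) (hc : 0 < c) (hT : 0 < T) :
    ∃ C' > 0, ∀ τ : ℝ, 0 < τ → τ ≤ T →
      ∀ (k : ℝ → ℝ → ℝ → Matrix (Fin n) (Fin n) ℝ) (G : Fin n → ℝ → ℝ)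
        (w : Fin n → ℝ → ℝ),
        (∀ i j s, Measurable (fun p : ℝ × ℝ => k s p.1 p.2 i j)) →
        (∀ j, MemLp (G j) 2 (volume : Measure ℝ)) →
        (∀ s ∈ Set.Ioo 0 τ, ∀ y z i j,
          |k s y z i j| ≤ C * (Real.sqrt s)⁻¹ * Real.exp (-c * (y - z) ^ 2 / s) *
            (Real.sqrt (τ - s))⁻¹ * Real.exp (-c * z ^ 2 / (τ - s))) →
        (∀ i y, w i y = ∫ s in (0:ℝ)..τ, ∫ z : ℝ, ∑ j, k s y z i j * G j z) →
        ∑ i, (eLpNorm (w i) 2 (volume : Measure ℝ)) ^ 2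
          ≤ ENNReal.ofReal (C' ^ 2 * τ) *
              ∑ j, (eLpNorm (G j) 2 (volume : Measure ℝ)) ^ 2 :=
  duhamel_L2_bound_general n C c T hC hc
end
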